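/- Let c_* := π/(2√2) and η̃(x) := (π² − 4πx + 2x²)/16. Let ζ : ℝ × ℝ → ℝ be continuously differentiable and 2π-periodic in the second (spatial) variable x, and suppose that for every t ∈ ℝ and every x ∈ (0, 2π): 2c_*·∂t ζ(t,x) = (c_*² − 2η̃(x))·∂x ζ(t,x) − 2·(ζ(t,x) − ζ(t,0))·∂x ζ(t,x) − (1/π)·∫₀^{2π} η̃'(s)·ζ(t,s) ds + (1/2)·[ G(t,x) − (1/2π)·∫₀^{2π} G(t,s) ds ], where G(t,x) := ∫₀^x ( μ(t,y) − μ̄(t) ) dy, μ(t,y) := ζ(t,y) + 2·(∂x ζ(t,y))², and μ̄(t) := (1/2π)·∫₀^{2π} μ(t,y) dy. Then the function t ↦ ∫₀^{2π} ζ(t,x) dx is constant on ℝ. -/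

import Mathlib

open Real MeasureTheory

/-- The limiting wave speed `c_* = π/(2√2)`. -/
noncomputable def cStar : ℝ := π / (2 * Real.sqrt 2)

/-- The peaked periodic profile written on the period `[0, 2π]`
(peaks at the endpoints). -/
noncomputable def etaTilde (x : ℝ) : ℝ := (π ^ 2 - 4 * π * x + 2 * x ^ 2) / 16

/-- `μ(t,y) = ζ(t,y) + 2(∂ₓζ(t,y))²`. -/
noncomputable def mu (ζ : ℝ × ℝ → ℝ) (t y : ℝ) : ℝ :=
  ζ (t, y) + 2 * (deriv (fun y' => ζ (t, y')) y) ^ 2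

/-- `μ̄(t) = (1/2π)∫₀^{2π} μ(t,y) dy`. -/
noncomputable def mubar (ζ : ℝ × ℝ → ℝ) (t : ℝ) : ℝ :=
  (1/(2*π)) * ∫ y in (0:ℝ)..(2*π), mu ζ t y

/-- `G(t,x) = ∫₀ˣ (μ(t,y) − μ̄(t)) dy`. -/
noncomputable def Gfun (ζ : ℝ × ℝ → ℝ) (t x : ℝ) : ℝ :=
  ∫ y in (0:ℝ)..x, (mu ζ t y - mubar ζ t)

/-! Integrate the equation over one period. The transport term has coefficient
`c_*² − 2η̃`, which vanishes at both endpoints, so integrating it by parts leaves exactly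
`2 ∫ η̃' ζ`, which cancels the nonlocal constant `(1/π) ∫ η̃' ζ` integrated over a period of
length `2π`. The term `2 (ζ − ζ(t,0)) ∂ₓζ` is the derivative of a periodic function, and `G`
enters only through its deviation from its mean. Hence `∫ ∂ₜζ = 0`, and differentiation under
the integral sign shows that the mean is constant. -/

open Set

section ParametricIntegral

variable {E : Type*} [NormedAddCommGroup E] [NormedSpace ℝ E] {f : ℝ × ℝ → E}

lemma DifferentiableAt.hasDerivAt_comp_prodMk_const {t x : ℝ}
    (hf : DifferentiableAt ℝ f (t, x)) :
    HasDerivAt (fun s => f (s, x)) (fderiv ℝ f (t, x) (1, 0)) t :=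
  hf.hasFDerivAt.comp_hasDerivAt t ((hasDerivAt_id t).prodMk (hasDerivAt_const t x))

lemma ContDiff.continuous_deriv_comp_prodMk_const (hf : ContDiff ℝ 1 f) :
    Continuous fun p : ℝ × ℝ => deriv (fun s => f (s, p.2)) p.1 := by
  have hderiv : (fun p : ℝ × ℝ => deriv (fun s => f (s, p.2)) p.1)
      = fun p => fderiv ℝ f p (1, 0) :=
    funext fun p => (hf.differentiable one_ne_zero p).hasDerivAt_comp_prodMk_const.deriv
  rw [hderiv]
  exact (hf.continuous_fderiv one_ne_zero).clm_apply continuous_const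

theorem ContDiff.hasDerivAt_intervalIntegral (hf : ContDiff ℝ 1 f) (a b t₀ : ℝ) :
    HasDerivAt (fun t => ∫ x in a..b, f (t, x))
      (∫ x in a..b, deriv (fun s => f (s, x)) t₀) t₀ := by
  obtain ⟨C, hC⟩ := ((isCompact_closedBall t₀ 1).prod isCompact_uIcc)
    |>.exists_bound_of_continuousOn hf.continuous_deriv_comp_prodMk_const.continuousOn
  have hslice : ∀ t, Continuous fun x => f (t, x) := fun t =>
    hf.continuous.comp (continuous_const.prodMk continuous_id)
  refine (intervalIntegral.hasDerivAt_integral_of_dominated_loc_of_deriv_le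
    (F' := fun t x => deriv (fun s => f (s, x)) t) (bound := fun _ => C)
    (Metric.ball_mem_nhds t₀ one_pos) (.of_forall fun t => (hslice t).aestronglyMeasurable)
    ((hslice t₀).intervalIntegrable _ _)
    (hf.continuous_deriv_comp_prodMk_const.comp
      (continuous_const.prodMk continuous_id)).aestronglyMeasurable
    ?_ intervalIntegrable_const ?_).2
  · exact .of_forall fun x hx t ht =>
      hC (t, x) ⟨Metric.ball_subset_closedBall ht, uIoc_subset_uIcc hx⟩
  · exact .of_forall fun x _ t _ =>
      ((hf.comp (contDiff_id.prodMk contDiff_const)).differentiable one_ne_zero t).hasDerivAt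

end ParametricIntegral

namespace intervalIntegral

theorem integral_sub_average {E : Type*} [NormedAddCommGroup E]
    [NormedSpace ℝ E] [CompleteSpace E] {g : ℝ → E} {a b : ℝ}
    (hg : IntervalIntegrable g volume a b) (hab : a ≠ b) :
    ∫ x in a..b, (g x - (b - a)⁻¹ • ∫ y in a..b, g y) = 0 := by
  rw [integral_sub hg intervalIntegrable_const, integral_const,
    smul_inv_smul₀ (sub_ne_zero.2 hab.symm), sub_self]

theorem integral_two_mul_sub_mul_deriv_eq_zero {f : ℝ → ℝ} {a b : ℝ} (c : ℝ)
    (hf : ContDiff ℝ 1 f) (hfab : f b = f a) :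
    ∫ x in a..b, 2 * (f x - c) * deriv f x = 0 := by
  have hsq : ∀ x ∈ uIcc a b,
      HasDerivAt (fun x => (f x - c) ^ 2) (2 * (f x - c) * deriv f x) x := fun x _ => by
    simpa using ((hf.differentiable one_ne_zero x).hasDerivAt.sub_const c).fun_pow 2
  have hf' := hf.continuous_deriv le_rfl
  have hf0 := hf.continuous
  rw [integral_eq_sub_of_hasDerivAt hsq
    (Continuous.intervalIntegrable (by fun_prop) _ _), hfab, sub_self]

end intervalIntegral

lemma cStar_pos : 0 < cStar := by
  unfold cStar
  positivity

lemma cStar_sq_eq_two_mul_etaTilde_zero : cStar ^ 2 = 2 * etaTilde 0 := by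
  rw [cStar, div_pow, mul_pow, sq_sqrt zero_le_two, etaTilde]
  ring

lemma etaTilde_two_pi : etaTilde (2 * π) = etaTilde 0 := by
  rw [etaTilde, etaTilde]
  ring

lemma continuous_etaTilde : Continuous etaTilde := by
  unfold etaTilde
  fun_prop

lemma hasDerivAt_etaTilde (x : ℝ) : HasDerivAt etaTilde ((x - π) / 4) x := by
  have h : HasDerivAt (fun x : ℝ => (π ^ 2 - 4 * π * x + 2 * x ^ 2) / 16)
      ((0 - 4 * π * 1 + 2 * ((2 : ℕ) * x ^ 1)) / 16) x :=
    (((hasDerivAt_const x _).sub ((hasDerivAt_id x).const_mul _)).add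
      ((hasDerivAt_pow 2 x).const_mul 2)).div_const 16
  show HasDerivAt (fun x => (π ^ 2 - 4 * π * x + 2 * x ^ 2) / 16) _ x
  convert h using 1
  push_cast
  ring

lemma integral_cStar_sq_sub_etaTilde_mul_deriv {f : ℝ → ℝ} (hf : ContDiff ℝ 1 f) :
    ∫ x in (0:ℝ)..(2*π), (cStar ^ 2 - 2 * etaTilde x) * deriv f x
      = 2 * ∫ x in (0:ℝ)..(2*π), deriv etaTilde x * f x := by
  have hu : ∀ x ∈ uIcc 0 (2 * π), HasDerivAt (fun x => cStar ^ 2 - 2 * etaTilde x)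
      (-(2 * ((x - π) / 4))) x :=
    fun x _ => ((hasDerivAt_etaTilde x).const_mul 2).const_sub _
  have hv : ∀ x ∈ uIcc 0 (2 * π), HasDerivAt f (deriv f x) x :=
    fun x _ => (hf.differentiable one_ne_zero x).hasDerivAt
  rw [intervalIntegral.integral_mul_deriv_eq_deriv_mul hu hv
    (Continuous.intervalIntegrable (by fun_prop) _ _)
    ((hf.continuous_deriv le_rfl).intervalIntegrable _ _), etaTilde_two_pi,
    cStar_sq_eq_two_mul_etaTilde_zero, ← intervalIntegral.integral_const_mul]
  simp only [(hasDerivAt_etaTilde _).deriv, sub_self, zero_mul, zero_sub]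
  rw [← intervalIntegral.integral_neg]
  congr 1 with x
  ring

theorem integral_evolution_rhs_eq_zero {f g : ℝ → ℝ} (hf : ContDiff ℝ 1 f)
    (hfper : f (2 * π) = f 0) (hg : Continuous g) :
    ∫ x in (0:ℝ)..(2*π), ((cStar ^ 2 - 2 * etaTilde x) * deriv f x
        - 2 * (f x - f 0) * deriv f x
        - (1/π) * (∫ s in (0:ℝ)..(2*π), deriv etaTilde s * f s)
        + (1/2) * (g x - (1/(2*π)) * ∫ s in (0:ℝ)..(2*π), g s)) = 0 := by
  have hf' := hf.continuous_deriv le_rfl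
  have hη := continuous_etaTilde
  have hf0 := hf.continuous
  have hint {h : ℝ → ℝ} (h_cont : Continuous h) : IntervalIntegrable h volume 0 (2 * π) :=
    h_cont.intervalIntegrable _ _
  have hmean : ∫ x in (0:ℝ)..(2*π), (g x - (1/(2*π)) * ∫ s in (0:ℝ)..(2*π), g s) = 0 := by
    simpa using
      intervalIntegral.integral_sub_average (hg.intervalIntegrable 0 (2 * π)) two_pi_pos.ne
  rw [intervalIntegral.integral_add (hint (by fun_prop)) (hint (by fun_prop)),
    intervalIntegral.integral_sub (hint (by fun_prop)) (hint (by fun_prop)),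
    intervalIntegral.integral_sub (hint (by fun_prop)) (hint (by fun_prop)),
    integral_cStar_sq_sub_etaTilde_mul_deriv hf,
    intervalIntegral.integral_two_mul_sub_mul_deriv_eq_zero _ hf hfper,
    intervalIntegral.integral_const, intervalIntegral.integral_const_mul, hmean, smul_eq_mul]
  field_simp
  ring

lemma continuous_Gfun {ζ : ℝ × ℝ → ℝ} {t : ℝ} (hζ : ContDiff ℝ 1 fun y => ζ (t, y)) :
    Continuous (Gfun ζ t) := by
  have hmu : Continuous (mu ζ t) :=
    hζ.continuous.add (continuous_const.mul ((hζ.continuous_deriv le_rfl).pow 2))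
  exact intervalIntegral.continuous_primitive
    (fun a b => (hmu.sub continuous_const).intervalIntegrable a b) 0

/-- For a `C¹`, spatially `2π`-periodic solution `ζ` of the nonlinear evolution
equation for perturbations of the peaked traveling wave, the mean
`∫₀^{2π} ζ(t,x) dx` is conserved in time. -/
theorem mean_conserved (ζ : ℝ × ℝ → ℝ) (hsmooth : ContDiff ℝ 1 ζ)
    (hper : ∀ t x : ℝ, ζ (t, x + 2*π) = ζ (t, x))
    (hpde : ∀ t : ℝ, ∀ x ∈ Set.Ioo (0:ℝ) (2*π),
      2 * cStar * deriv (fun s => ζ (s, x)) t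
        = (cStar ^ 2 - 2 * etaTilde x) * deriv (fun y => ζ (t, y)) x
          - 2 * (ζ (t, x) - ζ (t, 0)) * deriv (fun y => ζ (t, y)) x
          - (1/π) * (∫ s in (0:ℝ)..(2*π), deriv etaTilde s * ζ (t, s))
          + (1/2) * (Gfun ζ t x - (1/(2*π)) * ∫ s in (0:ℝ)..(2*π), Gfun ζ t s)) :
    ∀ t₁ t₂ : ℝ, (∫ x in (0:ℝ)..(2*π), ζ (t₁, x)) = ∫ x in (0:ℝ)..(2*π), ζ (t₂, x) := by
  have hslice : ∀ t, ContDiff ℝ 1 fun y => ζ (t, y) := fun t =>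
    hsmooth.comp (contDiff_const.prodMk contDiff_id)
  have htime : ∀ t, ∫ x in (0:ℝ)..(2*π), deriv (fun s => ζ (s, x)) t = 0 := fun t => by
    rw [intervalIntegral.integral_congr_Ioo_of_le two_pi_pos.le fun x hx =>
        (eq_inv_mul_iff_mul_eq₀ (mul_pos two_pos cStar_pos).ne').2 (hpde t x hx),
      intervalIntegral.integral_const_mul,
      integral_evolution_rhs_eq_zero (hslice t) (by simpa using hper t 0)
        (continuous_Gfun (hslice t)), mul_zero]
  exact is_const_of_deriv_eq_zero
    (fun t => (hsmooth.hasDerivAt_intervalIntegral 0 (2 * π) t).differentiableAt)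
    (fun t => (hsmooth.hasDerivAt_intervalIntegral 0 (2 * π) t).deriv.trans (htime t))
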